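/- arXiv:2105.08815 — 8 statements merged into one kernel-verified Lean document; each statement's English description precedes it below -/
import Mathlib

section
/- Let B be a boolean algebra, let Filt(B) be the set of all filters of B, let X be the set of proper filters of B ordered by inclusion, and let U be the frame of upward-closed subsets of X. Define i : Filt(B) → U by i(F) = {G ∈ X | F ⊆ G}. Then i({⊤}) is the top of U, i(B) is the bottom of U, and for all filters F, G the smallest filter containing F ∪ G is sent to i(F) ∩ i(G); moreover, for every frame L and every map f : Filt(B) → L satisfying f({⊤}) = ⊤, f(B) = ⊥, and f(smallest filter containing F ∪ G) = f(F) ⊓ f(G) for all filters F, G, there exists a unique frame homomorphism φ : U → L with φ ∘ i = f. Hence U is the free frame on the bounded meet-semilattice Filt(B) ordered by reverse inclusion. -/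
/-- A filter of a boolean algebra: a nonempty, upward-closed subset closed under
binary meets. -/
def IsBFilter {B : Type*} [BooleanAlgebra B] (F : Set B) : Prop :=
  F.Nonempty ∧ IsUpperSet F ∧ ∀ a ∈ F, ∀ b ∈ F, a ⊓ b ∈ F

/-- The set of all filters of `B`, ordered by inclusion (as subsets). -/
abbrev BFilter (B : Type*) [BooleanAlgebra B] := {F : Set B // IsBFilter F}

/-- The set of proper filters of `B`, ordered by inclusion. -/
abbrev ProperBFilter (B : Type*) [BooleanAlgebra B] := {F : Set B // IsBFilter F ∧ ⊥ ∉ F}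

/-- The Alexandroff topology on a preorder: opens are the upward-closed sets. -/
def alexandroff (X : Type*) [Preorder X] : TopologicalSpace X where
  IsOpen := IsUpperSet
  isOpen_univ := isUpperSet_univ
  isOpen_inter := fun _ _ hs ht => hs.inter ht
  isOpen_sUnion := fun _ h => isUpperSet_sUnion h

noncomputable instance (B : Type*) [BooleanAlgebra B] :
    TopologicalSpace (ProperBFilter B) := alexandroff _

/-- The map `i : Filt(B) → U` into the frame of upward-closed subsets of the
poset of proper filters, `i(F) = {G | F ⊆ G}`. -/
def bFilterIota {B : Type*} [BooleanAlgebra B] (F : BFilter B) :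
    TopologicalSpace.Opens (ProperBFilter B) :=
  ⟨{G : ProperBFilter B | F.1 ⊆ G.1}, by
    intro G G' hle hF
    exact le_trans (le_of_eq rfl) (le_trans hF (Subtype.coe_le_coe.mpr hle))⟩

theorem isBFilter_singleton_top {B : Type*} [BooleanAlgebra B] :
    IsBFilter {(⊤ : B)} := by
  refine ⟨⟨⊤, rfl⟩, fun a b hab ha => ?_, fun a ha b hb => ?_⟩
  · simp only [Set.mem_singleton_iff] at ha ⊢
    exact le_antisymm le_top (ha ▸ hab)
  · simp only [Set.mem_singleton_iff] at ha hb ⊢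
    simp [ha, hb]

theorem isBFilter_univ {B : Type*} [BooleanAlgebra B] : IsBFilter (Set.univ : Set B) :=
  ⟨⟨⊤, trivial⟩, fun _ _ _ _ => trivial, fun _ _ _ _ => trivial⟩

theorem isBFilter_sInter {B : Type*} [BooleanAlgebra B] {S : Set (Set B)}
    (h : ∀ H ∈ S, IsBFilter H) : IsBFilter (⋂₀ S) := by
  refine ⟨⟨⊤, ?_⟩, fun a b hab ha => ?_, fun a ha b hb => ?_⟩
  · intro H hH
    obtain ⟨x, hx⟩ := (h H hH).1
    exact (h H hH).2.1 le_top hx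
  · exact fun H hH => (h H hH).2.1 hab (ha H hH)
  · exact fun H hH => (h H hH).2.2 a (ha H hH) b (hb H hH)

/-- The smallest filter containing `F ∪ G`. -/
def bFilterJoin {B : Type*} [BooleanAlgebra B] (F G : BFilter B) : BFilter B :=
  ⟨⋂₀ {H : Set B | IsBFilter H ∧ F.1 ∪ G.1 ⊆ H},
    isBFilter_sInter (fun _ hH => hH.1)⟩

/-!
Every upper set `U` of proper filters is the union of the principal upper sets `i(G)`, `G ∈ U`,
so a frame homomorphism extending `f` is forced to send `U` to `⨆_{G ∈ U} f G`. Conversely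
this formula preserves arbitrary joins outright. It preserves `⊤` and binary meets
because `f` is antitone and `f F ≤ ⨆_{G ∈ U} f G` whenever `i(F) ⊆ U`: either `F` is proper
and lies in `U`, or `F = B` and `f F = ⊥`. Meets then follow by frame distributivity, since
`f G ⊓ f H = f (G ∨ H)` with `i(G ∨ H) = i(G) ∩ i(H)`.
-/

open TopologicalSpace

section FreeFrame

variable {B : Type*} [BooleanAlgebra B]

namespace BFilter

theorem top_mem (F : BFilter B) : (⊤ : B) ∈ F.1 :=
  let ⟨_, hx⟩ := F.2.1
  F.2.2.1 le_top hx

theorem eq_univ_of_bot_mem {F : BFilter B} (h : (⊥ : B) ∈ F.1) :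
    F = ⟨Set.univ, isBFilter_univ⟩ :=
  Subtype.ext (Set.eq_univ_of_forall fun _ => F.2.2.1 bot_le h)

end BFilter

theorem subset_bFilterJoin_left (F G : BFilter B) : F.1 ⊆ (bFilterJoin F G).1 :=
  fun _ hx _ hH => hH.2 (Or.inl hx)

theorem subset_bFilterJoin_right (F G : BFilter B) : G.1 ⊆ (bFilterJoin F G).1 :=
  fun _ hx _ hH => hH.2 (Or.inr hx)

theorem bFilterJoin_subset {F G : BFilter B} {H : Set B} (hH : IsBFilter H)
    (hF : F.1 ⊆ H) (hG : G.1 ⊆ H) : (bFilterJoin F G).1 ⊆ H :=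
  fun _ hx => hx H ⟨hH, Set.union_subset hF hG⟩

theorem bFilterJoin_eq_right {F G : BFilter B} (h : F.1 ⊆ G.1) : bFilterJoin F G = G :=
  Subtype.ext <| (bFilterJoin_subset G.2 h subset_rfl).antisymm (subset_bFilterJoin_right F G)

theorem antitone_of_map_bFilterJoin {L : Type*} [SemilatticeInf L] {f : BFilter B → L}
    (hf : ∀ F G, f (bFilterJoin F G) = f F ⊓ f G) {F G : BFilter B} (h : F.1 ⊆ G.1) :
    f G ≤ f F := by
  rw [← bFilterJoin_eq_right h, hf]
  exact inf_le_left

namespace ProperBFilter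

def toBFilter (G : ProperBFilter B) : BFilter B := ⟨G.1, G.2.1⟩

theorem isUpperSet_opens (U : Opens (ProperBFilter B)) : IsUpperSet (U : Set (ProperBFilter B)) :=
  U.2

end ProperBFilter

open ProperBFilter

theorem bFilterIota_singleton_top : bFilterIota ⟨{(⊤ : B)}, isBFilter_singleton_top⟩ = ⊤ :=
  Opens.ext <| Set.eq_univ_of_forall fun G =>
    Set.singleton_subset_iff.mpr G.toBFilter.top_mem

theorem bFilterIota_univ : bFilterIota ⟨(Set.univ : Set B), isBFilter_univ⟩ = ⊥ :=
  Opens.ext <| Set.eq_empty_of_forall_notMem fun G hG => G.2.2 (hG (Set.mem_univ ⊥))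

theorem bFilterIota_bFilterJoin (F G : BFilter B) :
    bFilterIota (bFilterJoin F G) = bFilterIota F ⊓ bFilterIota G :=
  Opens.ext <| Set.ext fun H =>
    ⟨fun h => ⟨(subset_bFilterJoin_left F G).trans h, (subset_bFilterJoin_right F G).trans h⟩,
      fun h => bFilterJoin_subset H.2.1 h.1 h.2⟩

theorem iSup_bFilterIota_toBFilter (U : Opens (ProperBFilter B)) :
    ⨆ G ∈ U, bFilterIota G.toBFilter = U := by
  ext H
  simp only [SetLike.mem_coe, Opens.mem_iSup]
  exact ⟨fun ⟨_, hG, hGH⟩ => isUpperSet_opens U hGH hG, fun hH => ⟨H, hH, Set.Subset.rfl⟩⟩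

theorem FrameHom.ext_bFilterIota {L : Type*} [CompleteLattice L]
    {φ ψ : FrameHom (Opens (ProperBFilter B)) L} (h : ⇑φ ∘ bFilterIota = ⇑ψ ∘ bFilterIota) :
    φ = ψ := by
  ext U
  rw [← iSup_bFilterIota_toBFilter U]
  simp only [map_iSup]
  exact iSup_congr fun G => iSup_congr fun _ => congrFun h G.toBFilter

variable {L : Type*}

def bFilterLift [CompleteLattice L] (f : BFilter B → L) (U : Opens (ProperBFilter B)) : L :=
  ⨆ G ∈ U, f G.toBFilter

theorem bFilterLift_mono [CompleteLattice L] (f : BFilter B → L) : Monotone (bFilterLift f) :=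
  fun _ _ hUV => biSup_mono fun _ hG => hUV hG

theorem bFilterLift_sSup [CompleteLattice L] (f : BFilter B → L)
    (S : Set (Opens (ProperBFilter B))) :
    bFilterLift f (sSup S) = sSup (bFilterLift f '' S) := by
  refine le_antisymm (iSup₂_le fun G hG => ?_) (sSup_le ?_)
  · obtain ⟨U, hU, hGU⟩ := Opens.mem_sSup.mp hG
    exact (le_iSup₂ (f := fun G (_ : G ∈ U) => f G.toBFilter) G hGU).trans
      (le_sSup ⟨U, hU, rfl⟩)
  · rintro _ ⟨U, hU, rfl⟩
    exact bFilterLift_mono f (le_sSup hU)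

theorem le_bFilterLift [CompleteLattice L] {f : BFilter B → L}
    (hf_bot : f ⟨Set.univ, isBFilter_univ⟩ = ⊥) {F : BFilter B} {U : Opens (ProperBFilter B)}
    (h : bFilterIota F ≤ U) : f F ≤ bFilterLift f U := by
  by_cases hbot : (⊥ : B) ∈ F.1
  · rw [BFilter.eq_univ_of_bot_mem hbot, hf_bot]
    exact bot_le
  · exact le_iSup₂ (f := fun G (_ : G ∈ U) => f G.toBFilter) ⟨F.1, F.2, hbot⟩
      (h Set.Subset.rfl)

theorem bFilterLift_bFilterIota [CompleteLattice L] {f : BFilter B → L}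
    (hf_bot : f ⟨Set.univ, isBFilter_univ⟩ = ⊥)
    (hf_inf : ∀ F G, f (bFilterJoin F G) = f F ⊓ f G) (F : BFilter B) :
    bFilterLift f (bFilterIota F) = f F :=
  le_antisymm (iSup₂_le fun _ hG => antitone_of_map_bFilterJoin hf_inf hG)
    (le_bFilterLift hf_bot le_rfl)

theorem bFilterLift_inf [Order.Frame L] {f : BFilter B → L}
    (hf_bot : f ⟨Set.univ, isBFilter_univ⟩ = ⊥)
    (hf_inf : ∀ F G, f (bFilterJoin F G) = f F ⊓ f G) (U V : Opens (ProperBFilter B)) :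
    bFilterLift f (U ⊓ V) = bFilterLift f U ⊓ bFilterLift f V := by
  refine le_antisymm
    (le_inf (bFilterLift_mono f inf_le_left) (bFilterLift_mono f inf_le_right)) ?_
  simp only [bFilterLift, iSup_inf_eq, inf_iSup_eq]
  refine iSup₂_le fun H hH => iSup₂_le fun G hG => ?_
  rw [← hf_inf, ← bFilterLift]
  refine le_bFilterLift hf_bot fun K hK => ⟨isUpperSet_opens U ?_ hG, isUpperSet_opens V ?_ hH⟩
  · exact (subset_bFilterJoin_left _ _).trans hK
  · exact (subset_bFilterJoin_right _ _).trans hK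

def bFilterLiftHom [Order.Frame L] (f : BFilter B → L)
    (hf_top : f ⟨{(⊤ : B)}, isBFilter_singleton_top⟩ = ⊤)
    (hf_bot : f ⟨Set.univ, isBFilter_univ⟩ = ⊥)
    (hf_inf : ∀ F G, f (bFilterJoin F G) = f F ⊓ f G) :
    FrameHom (Opens (ProperBFilter B)) L where
  toFun := bFilterLift f
  map_inf' := bFilterLift_inf hf_bot hf_inf
  map_top' := by
    rw [← bFilterIota_singleton_top, bFilterLift_bFilterIota hf_bot hf_inf, hf_top]
  map_sSup' := bFilterLift_sSup f

end FreeFrame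

/-- The frame of upward-closed subsets of the poset of proper filters of a boolean
algebra `B` is the free frame on the bounded meet-semilattice of all filters of `B`
ordered by reverse inclusion: `i` sends the bottom filter `{⊤}` to `⊤`, the improper
filter `B` to `⊥`, joins of filters to meets, and every map `f` from filters to a
frame `L` with the corresponding preservation properties factors uniquely through
`i` via a frame homomorphism. -/
theorem upperSets_of_properFilters_free_frame
    (B : Type*) [BooleanAlgebra B] (L : Type*) [Order.Frame L]
    (f : BFilter B → L)
    (hf_top : f ⟨{(⊤ : B)}, isBFilter_singleton_top⟩ = ⊤)
    (hf_bot : f ⟨Set.univ, isBFilter_univ⟩ = ⊥)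
    (hf_inf : ∀ F G : BFilter B, f (bFilterJoin F G) = f F ⊓ f G) :
    bFilterIota ⟨{(⊤ : B)}, isBFilter_singleton_top⟩ = ⊤ ∧
    bFilterIota ⟨(Set.univ : Set B), isBFilter_univ⟩ = ⊥ ∧
    (∀ F G : BFilter B, bFilterIota (bFilterJoin F G) = bFilterIota F ⊓ bFilterIota G) ∧
    ∃! φ : FrameHom (TopologicalSpace.Opens (ProperBFilter B)) L,
      ⇑φ ∘ bFilterIota = f := by
  have hlift : ⇑(bFilterLiftHom f hf_top hf_bot hf_inf) ∘ bFilterIota = f :=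
    funext (bFilterLift_bFilterIota hf_bot hf_inf)
  exact ⟨bFilterIota_singleton_top, bFilterIota_univ, bFilterIota_bFilterJoin,
    _, hlift, fun ψ hψ => FrameHom.ext_bFilterIota (hψ.trans hlift.symm)⟩
end

section
/- Let B be a boolean algebra, X the set of proper filters of B ordered by inclusion, and let e(b) = {G ∈ X | b ∈ G}, an upward-closed subset of X. Then in the frame of upward-closed subsets of X, the pseudocomplement of e(b) equals e(¬b); consequently e(b) is a regular element of this frame, i.e., e(b)** = e(b). -/
/-- The map `e : B → ` (frame of upward-closed subsets of proper filters of `B`),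
`e(b) = {G | b ∈ G}`. -/
def bAlgIota {B : Type*} [BooleanAlgebra B] (b : B) :
    TopologicalSpace.Opens (ProperBFilter B) :=
  ⟨{G : ProperBFilter B | b ∈ G.1}, by
    intro G G' hle hb
    exact Subtype.coe_le_coe.mpr hle hb⟩

/-- The pseudocomplement `u* = ⨆ {v | v ⊓ u = ⊥}` of an element of a frame. -/
def framePseudo {L : Type*} [Order.Frame L] (u : L) : L := sSup {v | v ⊓ u = ⊥}

/-!
In a frame the pseudocomplement is the Heyting complement, so it suffices to show that an
upward-closed `v` is disjoint from `e(b)` iff every `G ∈ v` contains `bᶜ`. If some `G ∈ v` omits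
`bᶜ`, then `G` and `b` generate a proper filter above `G`, which lies in both `v` and `e(b)`.
-/

namespace ProperBFilter

variable {B : Type*} [BooleanAlgebra B]

theorem compl_notMem_of_mem (G : ProperBFilter B) {b : B} (hb : b ∈ G.1) : bᶜ ∉ G.1 := by
  intro hc
  have hbot : b ⊓ bᶜ ∈ G.1 := G.2.1.2.2 _ hb _ hc
  rw [inf_compl_eq_bot] at hbot
  exact G.2.2 hbot

/-- The filter generated by `G ∪ {b}`; it is proper exactly when `bᶜ ∉ G`. -/
theorem exists_le_mem_of_compl_notMem (G : ProperBFilter B) {b : B} (hc : bᶜ ∉ G.1) :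
    ∃ F : ProperBFilter B, G ≤ F ∧ b ∈ F.1 := by
  let F : Set B := {x | ∃ g ∈ G.1, g ⊓ b ≤ x}
  obtain ⟨g₀, hg₀⟩ := G.2.1.1
  have hbF : b ∈ F := ⟨g₀, hg₀, inf_le_right⟩
  have hupper : IsUpperSet F := fun x y hxy ⟨g, hg, hgx⟩ => ⟨g, hg, hgx.trans hxy⟩
  have hinf : ∀ x ∈ F, ∀ y ∈ F, x ⊓ y ∈ F := by
    rintro x ⟨g₁, hg₁, hx⟩ y ⟨g₂, hg₂, hy⟩
    refine ⟨g₁ ⊓ g₂, G.2.1.2.2 _ hg₁ _ hg₂, le_inf ?_ ?_⟩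
    · exact (inf_le_inf_right b inf_le_left).trans hx
    · exact (inf_le_inf_right b inf_le_right).trans hy
  have hproper : ⊥ ∉ F := by
    rintro ⟨g, hg, hgb⟩
    exact hc (G.2.1.2.1 (disjoint_iff_inf_le.2 hgb).le_compl_right hg)
  exact ⟨⟨F, ⟨⟨b, hbF⟩, hupper, hinf⟩, hproper⟩, fun x hx => ⟨x, hx, inf_le_left⟩, hbF⟩

end ProperBFilter

theorem framePseudo_eq_compl {L : Type*} [Order.Frame L] (u : L) : framePseudo u = uᶜ := by
  simp only [framePseudo, compl_eq_sSup_disjoint, disjoint_iff]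

section bAlgIota

variable {B : Type*} [BooleanAlgebra B]

theorem disjoint_bAlgIota_compl (b : B) : Disjoint (bAlgIota bᶜ) (bAlgIota b) := by
  rw [← TopologicalSpace.Opens.coe_disjoint, Set.disjoint_left]
  exact fun G hc hb => G.compl_notMem_of_mem hb hc

theorem le_bAlgIota_compl_iff_disjoint (v : TopologicalSpace.Opens (ProperBFilter B)) (b : B) :
    v ≤ bAlgIota bᶜ ↔ Disjoint v (bAlgIota b) := by
  refine ⟨fun h => (disjoint_bAlgIota_compl b).mono_left h, fun h G hG => ?_⟩
  by_contra hc
  obtain ⟨F, hGF, hbF⟩ := G.exists_le_mem_of_compl_notMem hc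
  -- opens of the Alexandroff topology are upward closed
  have hFv : F ∈ v := v.2 hGF hG
  exact (TopologicalSpace.Opens.coe_disjoint.2 h).notMem_of_mem_left hFv hbF

theorem compl_bAlgIota (b : B) : (bAlgIota b)ᶜ = bAlgIota bᶜ :=
  eq_of_forall_le_iff fun v => by
    rw [le_compl_iff_disjoint_right, le_bAlgIota_compl_iff_disjoint]

end bAlgIota

/-- In the frame of upward-closed subsets of the poset of proper filters of a
boolean algebra `B`, the pseudocomplement of `e(b)` is `e(¬ b)`; consequently
`e(b)` is a regular element, i.e. `e(b)** = e(b)`. -/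
theorem pseudo_bAlgIota (B : Type*) [BooleanAlgebra B] (b : B) :
    framePseudo (bAlgIota b) = bAlgIota bᶜ ∧
    framePseudo (framePseudo (bAlgIota b)) = bAlgIota b := by
  simp only [framePseudo_eq_compl, compl_bAlgIota, compl_compl, and_self]
end

section
/- Let B be a boolean algebra, X the set of proper filters of B ordered by inclusion, and e(b) = {G ∈ X | b ∈ G}, an upward-closed subset of X. For every subset S ⊆ B, if ⋂{e(s) | s ∈ S} = ∅ (that is, the infimum of e[S] in the frame of upward-closed subsets of X is the bottom), then there exist finitely many s₁, …, sₙ ∈ S with s₁ ⊓ ⋯ ⊓ sₙ = ⊥ in B. Hence the embedding e of B into the booleanization of the frame of upper sets of X is compact. -/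
section GeneratedFilter

variable {α : Type*} [SemilatticeInf α] [OrderTop α]

def generatedBFilter (S : Set α) : Set α :=
  {b | ∃ t : Finset α, ↑t ⊆ S ∧ t.inf id ≤ b}

theorem subset_generatedBFilter (S : Set α) : S ⊆ generatedBFilter S :=
  fun s hs => ⟨{s}, by simpa using hs, by simp⟩

theorem isUpperSet_generatedBFilter (S : Set α) : IsUpperSet (generatedBFilter S) :=
  fun _ _ hab ⟨t, htS, ht⟩ => ⟨t, htS, ht.trans hab⟩

theorem inf_mem_generatedBFilter [DecidableEq α] {S : Set α} {a b : α}
    (ha : a ∈ generatedBFilter S) (hb : b ∈ generatedBFilter S) :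
    a ⊓ b ∈ generatedBFilter S := by
  obtain ⟨t, htS, ht⟩ := ha
  obtain ⟨u, huS, hu⟩ := hb
  refine ⟨t ∪ u, by simpa using Set.union_subset htS huS, le_inf ?_ ?_⟩
  · exact (Finset.inf_mono Finset.subset_union_left).trans ht
  · exact (Finset.inf_mono Finset.subset_union_right).trans hu

theorem bot_mem_generatedBFilter_iff [OrderBot α] {S : Set α} :
    ⊥ ∈ generatedBFilter S ↔ ∃ t : Finset α, ↑t ⊆ S ∧ t.inf id = ⊥ :=
  exists_congr fun _ => and_congr_right' le_bot_iff

end GeneratedFilter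

theorem isBFilter_generatedBFilter {B : Type*} [BooleanAlgebra B] (S : Set B) :
    IsBFilter (generatedBFilter S) := by
  classical
  exact ⟨⟨⊤, ∅, by simp⟩, isUpperSet_generatedBFilter S,
    fun _ ha _ hb => inf_mem_generatedBFilter ha hb⟩

theorem exists_properBFilter_superset {B : Type*} [BooleanAlgebra B] {S : Set B}
    (hS : ∀ t : Finset B, ↑t ⊆ S → t.inf id ≠ ⊥) :
    ∃ G : ProperBFilter B, S ⊆ G.1 := by
  have hproper : ⊥ ∉ generatedBFilter S := fun hbot => by
    obtain ⟨t, htS, ht⟩ := bot_mem_generatedBFilter_iff.mp hbot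
    exact hS t htS ht
  exact ⟨⟨_, isBFilter_generatedBFilter S, hproper⟩, subset_generatedBFilter S⟩

/-- If a subset `S` of a boolean algebra `B` satisfies `⋂ {e(s) | s ∈ S} = ∅` in
the frame of upward-closed subsets of the poset of proper filters of `B`, then
some finite subset of `S` has meet `⊥`. Hence the embedding `e` of `B` into the
booleanization of this frame is compact. -/
theorem bAlgIota_compact (B : Type*) [BooleanAlgebra B] (S : Set B)
    (h : (⋂ s ∈ S, (bAlgIota s : Set (ProperBFilter B))) = ∅) :
    ∃ t : Finset B, ↑t ⊆ S ∧ t.inf id = ⊥ := by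
  by_contra! hS
  obtain ⟨G, hSG⟩ := exists_properBFilter_superset hS
  have hG : G ∈ ⋂ s ∈ S, (bAlgIota s : Set (ProperBFilter B)) :=
    Set.mem_iInter₂.mpr fun s hs => hSG hs
  simp [h] at hG
end

section
/- Let A be a bal-algebra and I an ℓ-ideal of A. Then the set K = {x ∈ A | (n·|x| − 1)⁺ ∈ I for all integers n ≥ 1} is an archimedean ℓ-ideal of A containing I, and every archimedean ℓ-ideal of A containing I contains K. That is, ar(I) = {x ∈ A | (n·|x| − 1)⁺ ∈ I for all n ≥ 1}. -/
/-- A bounded archimedean ℓ-algebra (bal-algebra): a commutative ℝ-algebra with a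
lattice order compatible with addition and multiplication, in which the algebra
map from ℝ is order-preserving, `1` is a strong order unit, and the order is
archimedean. -/
structure IsBal (A : Type*) [CommRing A] [Lattice A] [Algebra ℝ A] : Prop where
  add_le_add_right : ∀ a b : A, a ≤ b → ∀ c : A, a + c ≤ b + c
  mul_nonneg : ∀ a b : A, 0 ≤ a → 0 ≤ b → 0 ≤ a * b
  algebraMap_mono : Monotone (algebraMap ℝ A)
  strong_unit : ∀ a : A, ∃ n : ℕ, 1 ≤ n ∧ a ≤ n • (1 : A)
  arch : ∀ a b : A, (∀ n : ℕ, 1 ≤ n → n • a ≤ b) → a ≤ 0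

/-- An ℓ-ideal: a ring ideal `I` such that `|a| ≤ |b|` and `b ∈ I` imply `a ∈ I`,
where `|a| = a ⊔ (-a)`. -/
def IsLIdeal {A : Type*} [CommRing A] [Lattice A] (I : Ideal A) : Prop :=
  ∀ a b : A, b ∈ I → a ⊔ -a ≤ b ⊔ -b → a ∈ I

/-- An archimedean ℓ-ideal: whenever `(n • a - b)⁺ ∈ I` for every integer `n ≥ 1`,
also `a⁺ ∈ I`, where `x⁺ = x ⊔ 0`. -/
def IsArchLIdeal {A : Type*} [CommRing A] [Lattice A] (I : Ideal A) : Prop :=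
  ∀ a b : A, (∀ n : ℕ, 1 ≤ n → (n • a - b) ⊔ 0 ∈ I) → a ⊔ 0 ∈ I

/-- The archimedean hull of a subset `S`: the intersection of all archimedean
ℓ-ideals containing `S`. -/
def archHull {A : Type*} [CommRing A] [Lattice A] (S : Set A) : Ideal A :=
  sInf {I : Ideal A | IsLIdeal I ∧ IsArchLIdeal I ∧ S ⊆ ↑I}

/-!
Write `|x| = x ⊔ -x`. The set `K` is closed under addition because
`(n|x + y| - 1)⁺ ≤ (2n|x| - 1)⁺ + (2n|y| - 1)⁺`, and under multiplication by `c` because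
`|c x| ≤ |c| |x| ≤ m|x|` once `|c| ≤ m`, which the strong unit provides. It is archimedean by a
rescaling: if `b ≤ k` and `c = ((k + 1) m • a - b)⁺ ∈ K`, then `(k + 1)(m a⁺ - 1) ≤ c - 1`, so
`(m a⁺ - 1)⁺ ≤ (c - 1)⁺ ∈ I`. Conversely, an archimedean ℓ-ideal `J ⊇ I` applied to `a = |x|`,
`b = 1` contains `|x|`, hence `x`, for every `x ∈ K`; so `K` is the least archimedean ℓ-ideal
containing `I`.
-/

namespace IsBal

variable {A : Type*} [CommRing A] [Lattice A] [Algebra ℝ A]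

theorem isOrderedAddMonoid (hA : IsBal A) : IsOrderedAddMonoid A where
  add_le_add_left a b h c := hA.add_le_add_right a b h c

theorem isOrderedRing (hA : IsBal A) : IsOrderedRing A :=
  have := hA.isOrderedAddMonoid
  have : ZeroLEOneClass A := ⟨by simpa using hA.algebraMap_mono zero_le_one⟩
  .of_mul_nonneg hA.mul_nonneg

theorem posSMulMono (hA : IsBal A) : PosSMulMono ℝ A :=
  have := hA.isOrderedAddMonoid
  .of_smul_nonneg fun r hr a ha => by
    rw [Algebra.smul_def]
    exact hA.mul_nonneg _ _ (by simpa using hA.algebraMap_mono hr) ha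

end IsBal

section RealVectorLattice

variable {A : Type*} [AddCommGroup A] [Lattice A] [Module ℝ A] [PosSMulMono ℝ A]

theorem nsmul_posPart (n : ℕ) (a : A) : n • a⁺ = (n • a)⁺ := by
  rcases Nat.eq_zero_or_pos n with rfl | hn
  · simp
  · simpa only [← Nat.cast_smul_eq_nsmul ℝ, OrderIso.smulRight_apply, smul_zero, posPart_def] using
      (OrderIso.smulRight (Nat.cast_pos.2 hn : (0 : ℝ) < n)).map_sup a 0

theorem le_of_nsmul_le_nsmul {n : ℕ} (hn : n ≠ 0) {a b : A} (h : n • a ≤ n • b) : a ≤ b := by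
  simp only [← Nat.cast_smul_eq_nsmul ℝ] at h
  exact (OrderIso.smulRight (by positivity : (0 : ℝ) < n)).le_iff_le.1 h

variable [IsOrderedAddMonoid A]

theorem le_of_nsmul_le_of_nonneg {n : ℕ} (hn : n ≠ 0) {a b : A} (h : n • a ≤ b) (hb : 0 ≤ b) :
    a ≤ b :=
  le_of_nsmul_le_nsmul hn <|
    h.trans (by simpa using nsmul_le_nsmul_left hb (Nat.one_le_iff_ne_zero.2 hn))

theorem posPart_add_sub_le (a b c : A) : (a + b - c)⁺ ≤ (2 • a - c)⁺ + (2 • b - c)⁺ := by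
  have hsum : 0 ≤ (2 • a - c)⁺ + (2 • b - c)⁺ := add_nonneg (posPart_nonneg _) (posPart_nonneg _)
  refine sup_le (le_of_nsmul_le_of_nonneg two_ne_zero ?_ hsum) hsum
  calc 2 • (a + b - c) = (2 • a - c) + (2 • b - c) := by abel
    _ ≤ (2 • a - c)⁺ + (2 • b - c)⁺ := add_le_add (le_posPart _) (le_posPart _)

end RealVectorLattice

section LatticeOrderedRing

variable {A : Type*} [CommRing A] [Lattice A] [IsOrderedRing A]

-- `|a| |b| ∓ a b` are twice sums of products of positive and negative parts of `a` and `b`.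
theorem abs_mul_le_abs_mul_abs (a b : A) : |a * b| ≤ |a| * |b| := by
  have ha₀ := posPart_nonneg a
  have ha₁ := negPart_nonneg a
  have hb₀ := posPart_nonneg b
  have hb₁ := negPart_nonneg b
  rw [← posPart_add_negPart a, ← posPart_add_negPart b]
  conv_lhs => rw [← posPart_sub_negPart a, ← posPart_sub_negPart b]
  refine abs_le'.2 ⟨sub_nonneg.1 ?_, sub_nonneg.1 ?_⟩
  · calc (0 : A) ≤ 2 * (a⁺ * b⁻ + a⁻ * b⁺) :=
          mul_nonneg zero_le_two (add_nonneg (mul_nonneg ha₀ hb₁) (mul_nonneg ha₁ hb₀))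
      _ = _ := by ring
  · calc (0 : A) ≤ 2 * (a⁺ * b⁺ + a⁻ * b⁻) :=
          mul_nonneg zero_le_two (add_nonneg (mul_nonneg ha₀ hb₀) (mul_nonneg ha₁ hb₁))
      _ = _ := by ring

variable {I : Ideal A} {a b : A}

theorem IsLIdeal.abs_mem (hI : IsLIdeal I) (ha : a ∈ I) : |a| ∈ I :=
  hI _ a ha (abs_abs a).le

theorem IsLIdeal.mem_of_abs_mem (hI : IsLIdeal I) (ha : |a| ∈ I) : a ∈ I :=
  hI a _ ha (abs_abs a).ge

theorem IsLIdeal.mem_of_nonneg_of_le (hI : IsLIdeal I) (ha : 0 ≤ a) (hab : a ≤ b) (hb : b ∈ I) :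
    a ∈ I :=
  hI a b hb (abs_le_abs_of_nonneg ha hab)

theorem IsLIdeal.posPart_mem_of_le (hI : IsLIdeal I) (hab : a ≤ b) (hb : b⁺ ∈ I) : a⁺ ∈ I :=
  hI.mem_of_nonneg_of_le (posPart_nonneg a) (posPart_mono hab) hb

end LatticeOrderedRing

section ArchClosure

variable {A : Type*} [CommRing A] [Lattice A] [IsOrderedRing A] [Algebra ℝ A] [PosSMulMono ℝ A]

theorem posPart_nsmul_sub_one_le {a c : A} {k m : ℕ} (hc : 0 ≤ c)
    (h : ((k + 1) * m) • a ≤ c + k • 1) : (m • a⁺ - 1)⁺ ≤ (c - 1)⁺ := by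
  refine sup_le (le_of_nsmul_le_of_nonneg k.succ_ne_zero ?_ (posPart_nonneg _)) (posPart_nonneg _)
  calc (k + 1) • (m • a⁺ - 1) = (((k + 1) * m) • a)⁺ - (k + 1) • 1 := by
        rw [smul_sub, smul_smul, nsmul_posPart]
    _ ≤ c + k • 1 - (k + 1) • 1 :=
        sub_le_sub_right (sup_le h (add_nonneg hc (nsmul_nonneg zero_le_one k))) _
    _ = c - 1 := by rw [succ_nsmul]; abel
    _ ≤ (c - 1)⁺ := le_posPart _

def archClosure (hu : ∀ a : A, ∃ n : ℕ, 1 ≤ n ∧ a ≤ n • (1 : A)) (I : Ideal A)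
    (hI : IsLIdeal I) : Ideal A where
  carrier := {x | ∀ n : ℕ, 1 ≤ n → (n • |x| - 1)⁺ ∈ I}
  zero_mem' n _ := by simp
  add_mem' {x y} hx hy n hn := by
    refine hI.mem_of_nonneg_of_le (posPart_nonneg _) ?_
      (I.add_mem (hx (2 * n) (by omega)) (hy (2 * n) (by omega)))
    have hxy : n • |x + y| ≤ n • |x| + n • |y| := by
      simpa only [nsmul_add] using nsmul_le_nsmul_right (abs_add_le x y) n
    calc (n • |x + y| - 1)⁺ ≤ (n • |x| + n • |y| - 1)⁺ := posPart_mono (sub_le_sub_right hxy _)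
      _ ≤ _ := by simpa only [smul_smul] using posPart_add_sub_le (n • |x|) (n • |y|) 1
  smul_mem' c x hx n hn := by
    obtain ⟨m, hm, hcm⟩ := hu |c|
    refine hI.posPart_mem_of_le (sub_le_sub_right ?_ 1) (hx (n * m) (one_le_mul hn hm))
    calc n • |c • x| ≤ n • (|c| * |x|) := nsmul_le_nsmul_right (abs_mul_le_abs_mul_abs c x) n
      _ ≤ n • ((m • 1) * |x|) :=
          nsmul_le_nsmul_right (mul_le_mul_of_nonneg_right hcm (abs_nonneg x)) n
      _ = (n * m) • |x| := by rw [smul_mul_assoc, one_mul, smul_smul]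

variable {hu : ∀ a : A, ∃ n : ℕ, 1 ≤ n ∧ a ≤ n • (1 : A)} {I : Ideal A} {hI : IsLIdeal I}

theorem isLIdeal_archClosure : IsLIdeal (archClosure hu I hI) := fun _ _ hb hab n hn =>
  hI.posPart_mem_of_le (sub_le_sub_right (nsmul_le_nsmul_right hab n) 1) (hb n hn)

theorem le_archClosure : I ≤ archClosure hu I hI := fun x hx n _ =>
  hI.mem_of_nonneg_of_le (posPart_nonneg _)
    (sup_le (sub_le_self _ zero_le_one) (nsmul_nonneg (abs_nonneg x) n))
    (nsmul_mem (hI.abs_mem hx) n)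

theorem isArchLIdeal_archClosure : IsArchLIdeal (archClosure hu I hI) := by
  intro a b h m hm
  obtain ⟨k, -, hbk⟩ := hu b
  have hkm : 1 ≤ (k + 1) * m := one_le_mul (Nat.le_add_left 1 k) hm
  have hc : (1 • |(((k + 1) * m) • a - b)⁺| - 1)⁺ ∈ I := h _ hkm 1 le_rfl
  rw [one_nsmul, abs_of_nonneg (posPart_nonneg _)] at hc
  have hbound : ((k + 1) * m) • a ≤ (((k + 1) * m) • a - b)⁺ + k • 1 := by
    simpa using add_le_add (le_posPart (((k + 1) * m) • a - b)) hbk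
  change (m • |a⁺| - 1)⁺ ∈ I
  rw [abs_of_nonneg (posPart_nonneg a)]
  exact hI.mem_of_nonneg_of_le (posPart_nonneg _)
    (posPart_nsmul_sub_one_le (posPart_nonneg _) hbound) hc

theorem archClosure_le {J : Ideal A} (hJ : IsLIdeal J) (hJa : IsArchLIdeal J) (hIJ : I ≤ J) :
    archClosure hu I hI ≤ J := by
  intro x hx
  have : |x|⁺ ∈ J := hJa |x| 1 fun n hn => hIJ (hx n hn)
  rw [posPart_eq_self.2 (abs_nonneg x)] at this
  exact hJ.mem_of_abs_mem this

end ArchClosure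

/-- For a bal-algebra `A` and an ℓ-ideal `I` of `A`, the set
`K = {x | (n•|x| - 1)⁺ ∈ I for all n ≥ 1}` is an archimedean ℓ-ideal of `A`
containing `I`, it is least among archimedean ℓ-ideals containing `I`, and it
equals the archimedean hull `ar(I)`. -/
theorem archHull_eq {A : Type*} [CommRing A] [Lattice A] [Algebra ℝ A] (hA : IsBal A)
    (I : Ideal A) (hI : IsLIdeal I) :
    ∃ K : Ideal A,
      (K : Set A) = {x : A | ∀ n : ℕ, 1 ≤ n → (n • (x ⊔ -x) - 1) ⊔ 0 ∈ I} ∧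
      IsLIdeal K ∧ IsArchLIdeal K ∧ I ≤ K ∧
      (∀ J : Ideal A, IsLIdeal J → IsArchLIdeal J → I ≤ J → K ≤ J) ∧
      archHull (I : Set A) = K := by
  have := hA.isOrderedRing
  have := hA.posSMulMono
  let K := archClosure hA.strong_unit I hI
  have hK : IsLIdeal K := isLIdeal_archClosure
  have hKa : IsArchLIdeal K := isArchLIdeal_archClosure
  have hIK : I ≤ K := le_archClosure
  have hKmin (J : Ideal A) (hJ : IsLIdeal J) (hJa : IsArchLIdeal J) (hIJ : I ≤ J) : K ≤ J :=
    archClosure_le hJ hJa hIJ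
  refine ⟨K, rfl, hK, hKa, hIK, hKmin, le_antisymm (sInf_le ⟨hK, hKa, hIK⟩) ?_⟩
  exact le_sInf fun J ⟨hJ, hJa, hIJ⟩ => hKmin J hJ hJa hIJ
end

section
/- Let A be a bal-algebra, let e, f ∈ A be idempotents (e² = e and f² = f), and let r, s ∈ ℝ with 0 ≤ r and 0 ≤ s. Then (r·e) ⊓ (s·f) = min(r, s)·(e ⊓ f), where ⊓ denotes the lattice meet in A. -/
/-
Every square in a bal-algebra is nonnegative: since `1` is a strong unit, `a ⊓ b = 0` implies
`(c * a) ⊓ b = 0` for `c ≥ 0`, so `a⁺ * a⁻ = 0` and `a * a = a⁺ * a⁺ + a⁻ * a⁻`. Hence idempotents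
lie between `0` and `1`. For such `f`, any `g ≤ s • f` satisfies `g ≤ g * f` (expand
`0 ≤ (s • f - g) * (1 - f)`), so `(r • e) ⊓ (s • f)` is at most both `r • (e * f)` and `s • (e * f)`,
while `min r s • (e * f)` lies below `r • e` and `s • f`. Thus `(r • e) ⊓ (s • f) = min r s • (e * f)`,
and `r = s = 1` gives `e ⊓ f = e * f`.
-/
section LatticeOrderedGroup

variable {G : Type*} [AddCommGroup G] [Lattice G] [IsOrderedAddMonoid G]

theorem add_inf_eq_zero {x y b : G} (hx : x ⊓ b = 0) (hy : y ⊓ b = 0) : (x + y) ⊓ b = 0 := by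
  have hx0 : 0 ≤ x := hx ▸ inf_le_left
  have hy0 : 0 ≤ y := hy ▸ inf_le_left
  have hb0 : 0 ≤ b := hx ▸ inf_le_right
  refine le_antisymm ?_ (le_inf (add_nonneg hx0 hy0) hb0)
  have hsub_y : (x + y) ⊓ b - x ≤ y := sub_le_iff_le_add'.2 inf_le_left
  have hsub_b : (x + y) ⊓ b - x ≤ b :=
    sub_le_iff_le_add'.2 (inf_le_right.trans (le_add_of_nonneg_left hx0))
  have hle_x : (x + y) ⊓ b ≤ x := sub_nonpos.1 (hy ▸ le_inf hsub_y hsub_b)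
  exact hx ▸ le_inf hle_x inf_le_right

theorem nsmul_inf_eq_zero {a b : G} (h : a ⊓ b = 0) (n : ℕ) : (n • a) ⊓ b = 0 := by
  induction n with
  | zero => simpa using inf_eq_left.2 (h ▸ inf_le_right : (0 : G) ≤ b)
  | succ n ih => rw [succ_nsmul]; exact add_inf_eq_zero ih h

end LatticeOrderedGroup

section IdempotentInf

variable {R : Type*} [CommRing R] [Lattice R] [IsOrderedRing R]

theorem le_mul_of_le_of_mul_eq_self {f g x : R} (hf : f ≤ 1) (hx : x * f = x) (hg : g ≤ x) :
    g ≤ g * f := by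
  have h : 0 ≤ (x - g) * (1 - f) := mul_nonneg (sub_nonneg.2 hg) (sub_nonneg.2 hf)
  rw [show (x - g) * (1 - f) = g * f - g + (x - x * f) by ring, hx, sub_self, add_zero] at h
  exact sub_nonneg.1 h

variable [Algebra ℝ R]

theorem inf_smul_le_smul_mul {e f : R} (hf : IsIdempotentElem f) (hf0 : 0 ≤ f) (hf1 : f ≤ 1)
    (r s : ℝ) : (r • e) ⊓ (s • f) ≤ r • (e * f) :=
  calc (r • e) ⊓ (s • f)
      ≤ ((r • e) ⊓ (s • f)) * f :=
        le_mul_of_le_of_mul_eq_self hf1 (by rw [smul_mul_assoc, hf.eq]) inf_le_right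
    _ ≤ (r • e) * f := mul_le_mul_of_nonneg_right inf_le_left hf0
    _ = r • (e * f) := smul_mul_assoc r e f

variable [IsOrderedModule ℝ R]

theorem smul_inf_smul_of_isIdempotentElem {e f : R} (he : IsIdempotentElem e) (he0 : 0 ≤ e)
    (he1 : e ≤ 1) (hf : IsIdempotentElem f) (hf0 : 0 ≤ f) (hf1 : f ≤ 1) {r s : ℝ} (hr : 0 ≤ r)
    (hs : 0 ≤ s) : (r • e) ⊓ (s • f) = min r s • (e * f) := by
  have hef0 : 0 ≤ e * f := mul_nonneg he0 hf0
  apply le_antisymm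
  · rcases le_total r s with h | h
    · rw [min_eq_left h]
      exact inf_smul_le_smul_mul hf hf0 hf1 r s
    · rw [min_eq_right h, inf_comm, mul_comm]
      exact inf_smul_le_smul_mul he he0 he1 s r
  · apply le_inf
    · calc min r s • (e * f) ≤ r • (e * f) := smul_le_smul_of_nonneg_right (min_le_left r s) hef0
        _ ≤ r • e := smul_le_smul_of_nonneg_left (mul_le_of_le_one_right he0 hf1) hr
    · calc min r s • (e * f) ≤ s • (e * f) := smul_le_smul_of_nonneg_right (min_le_right r s) hef0
        _ ≤ s • f := smul_le_smul_of_nonneg_left (mul_le_of_le_one_left hf0 he1) hs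

theorem IsIdempotentElem.inf_eq_mul {e f : R} (he : IsIdempotentElem e) (he0 : 0 ≤ e)
    (he1 : e ≤ 1) (hf : IsIdempotentElem f) (hf0 : 0 ≤ f) (hf1 : f ≤ 1) : e ⊓ f = e * f := by
  simpa using smul_inf_smul_of_isIdempotentElem he he0 he1 hf hf0 hf1 zero_le_one zero_le_one

end IdempotentInf

namespace IsBal

variable {A : Type*} [CommRing A] [Lattice A] [Algebra ℝ A]

theorem isOrderedModule (hA : IsBal A) : IsOrderedModule ℝ A :=
  have := hA.isOrderedRing
  .of_algebraMap_mono hA.algebraMap_mono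

theorem mul_inf_eq_zero (hA : IsBal A) {a b c : A} (h : a ⊓ b = 0) (hc : 0 ≤ c) :
    (c * a) ⊓ b = 0 := by
  have := hA.isOrderedRing
  have ha0 : 0 ≤ a := h ▸ inf_le_left
  have hb0 : 0 ≤ b := h ▸ inf_le_right
  obtain ⟨n, -, hcn⟩ := hA.strong_unit c
  have hca : c * a ≤ n • a := by
    simpa using mul_le_mul_of_nonneg_right hcn ha0
  refine le_antisymm ?_ (le_inf (hA.mul_nonneg _ _ hc ha0) hb0)
  exact nsmul_inf_eq_zero h n ▸ inf_le_inf_right b hca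

theorem posPart_mul_negPart (hA : IsBal A) (a : A) : a⁺ * a⁻ = 0 := by
  have := hA.isOrderedRing
  have h : (a⁻ * a⁺) ⊓ a⁻ = 0 :=
    hA.mul_inf_eq_zero (posPart_inf_negPart_eq_zero a) (negPart_nonneg a)
  have h' : (a⁺ * a⁻) ⊓ (a⁻ * a⁺) = 0 :=
    hA.mul_inf_eq_zero (inf_comm (a⁻ * a⁺) a⁻ ▸ h) (posPart_nonneg a)
  rwa [mul_comm a⁻, inf_idem] at h'

theorem mul_self_nonneg (hA : IsBal A) (a : A) : 0 ≤ a * a := by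
  have := hA.isOrderedRing
  have hsq : a * a = a⁺ * a⁺ + a⁻ * a⁻ :=
    calc a * a = (a⁺ - a⁻) * (a⁺ - a⁻) := by rw [posPart_sub_negPart]
      _ = a⁺ * a⁺ + a⁻ * a⁻ := by linear_combination (-2 : A) * hA.posPart_mul_negPart a
  rw [hsq]
  exact add_nonneg (hA.mul_nonneg _ _ (posPart_nonneg a) (posPart_nonneg a))
    (hA.mul_nonneg _ _ (negPart_nonneg a) (negPart_nonneg a))

theorem nonneg_of_isIdempotentElem (hA : IsBal A) {e : A} (he : IsIdempotentElem e) : 0 ≤ e :=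
  he.eq ▸ hA.mul_self_nonneg e

theorem le_one_of_isIdempotentElem (hA : IsBal A) {e : A} (he : IsIdempotentElem e) : e ≤ 1 :=
  have := hA.isOrderedRing
  sub_nonneg.1 (hA.nonneg_of_isIdempotentElem he.one_sub)

end IsBal

/-- In a bal-algebra, for idempotents `e, f` and nonnegative reals `r, s`,
`(r • e) ⊓ (s • f) = min r s • (e ⊓ f)`. -/
theorem smul_idem_inf {A : Type*} [CommRing A] [Lattice A] [Algebra ℝ A] (hA : IsBal A)
    (e f : A) (he : e * e = e) (hf : f * f = f)
    (r s : ℝ) (hr : 0 ≤ r) (hs : 0 ≤ s) :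
    (r • e) ⊓ (s • f) = min r s • (e ⊓ f) := by
  have := hA.isOrderedRing
  have := hA.isOrderedModule
  have he0 := hA.nonneg_of_isIdempotentElem he
  have he1 := hA.le_one_of_isIdempotentElem he
  have hf0 := hA.nonneg_of_isIdempotentElem hf
  have hf1 := hA.le_one_of_isIdempotentElem hf
  rw [IsIdempotentElem.inf_eq_mul he he0 he1 hf hf0 hf1,
    smul_inf_smul_of_isIdempotentElem he he0 he1 hf hf0 hf1 hr hs]
end

section
/- Let A be a bal-algebra and let I, J be proper archimedean ℓ-ideals of A with I ⊄ J. Then there exists a proper archimedean ℓ-ideal K of A with J ⊆ K and K + I = A. -/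
/-!
Pick `a ∈ I \ J`. As `J` is archimedean, some `x = n • |a| ∈ I` has `(x - 1)⁺ ∉ J`. Let `K` be the
uniform closure of the ℓ-ideal generated by `J` and `(x - 1)⁻`; such closures are archimedean
because `1` is a strong unit. Then `K + I = A`, since `1 = (x - 1)⁻ + (1 - (x - 1)⁻)` and
`0 ≤ 1 - (x - 1)⁻ ≤ x`. If `1 ∈ K`, then `1 ≤ b + r • (x - 1)⁻ + 2⁻¹` for some `b ∈ J`;
multiplying by `(x - 1)⁺`, which annihilates the disjoint element `(x - 1)⁻`, puts `(x - 1)⁺`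
below `2 (x - 1)⁺ b ∈ J`, a contradiction.
-/

namespace IsBal

variable {A : Type*} [CommRing A] [Lattice A] [Algebra ℝ A]

theorem exists_le_smul_one (hA : IsBal A) (a : A) : ∃ r : ℝ, 0 < r ∧ a ≤ r • (1 : A) := by
  obtain ⟨n, hn, ha⟩ := hA.strong_unit a
  exact ⟨n, by exact_mod_cast hn, by rwa [Nat.cast_smul_eq_nsmul]⟩

end IsBal

namespace IsLIdeal

variable {A : Type*} [CommRing A] [Lattice A] [IsOrderedAddMonoid A] {J : Ideal A}

theorem abs_mem_iff (hJ : IsLIdeal J) {a : A} : |a| ∈ J ↔ a ∈ J :=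
  ⟨fun h => hJ a |a| h (abs_abs a).ge, fun h => hJ |a| a h (abs_abs a).le⟩

theorem mem_of_nonneg_of_le_s14 (hJ : IsLIdeal J) {a b : A} (ha : 0 ≤ a) (hab : a ≤ b)
    (hb : b ∈ J) : a ∈ J :=
  hJ a b hb <| by
    change |a| ≤ |b|
    rwa [abs_of_nonneg ha, abs_of_nonneg (ha.trans hab)]

end IsLIdeal

theorem IsArchLIdeal.exists_nsmul_sub_one_posPart_notMem {A : Type*} [CommRing A] [Lattice A]
    {J : Ideal A} (hJ : IsArchLIdeal J) {x : A} (hx : 0 ≤ x) (hxJ : x ∉ J) :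
    ∃ n : ℕ, (n • x - 1)⁺ ∉ J := by
  by_contra! h
  exact hxJ (sup_eq_left.2 hx ▸ hJ x 1 fun n _ => h n)

section LatticeOrderedRing

variable {A : Type*} [CommRing A] [Lattice A] [IsOrderedRing A]

theorem mul_le_abs_mul_abs (u v : A) : u * v ≤ |u| * |v| :=
  calc u * v = u * v⁺ + -u * v⁻ := by
        conv_lhs => rw [← posPart_sub_negPart v]
        ring
    _ ≤ |u| * v⁺ + |u| * v⁻ :=
        add_le_add (mul_le_mul_of_nonneg_right (le_abs_self u) (posPart_nonneg v))
          (mul_le_mul_of_nonneg_right (neg_le_abs u) (negPart_nonneg v))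
    _ = |u| * |v| := by rw [← mul_add, posPart_add_negPart]

theorem abs_mul_le (u v : A) : |u * v| ≤ |u| * |v| :=
  sup_le (mul_le_abs_mul_abs u v) (by simpa using mul_le_abs_mul_abs (-u) v)

theorem one_sub_negPart_sub_one_mem_Icc {x : A} (hx : 0 ≤ x) : 1 - (x - 1)⁻ ∈ Set.Icc 0 x := by
  rw [negPart_def, neg_sub]
  constructor
  · exact sub_nonneg.2 (sup_le (sub_le_self 1 hx) zero_le_one)
  · exact sub_le_comm.1 le_sup_left

variable [Algebra ℝ A] [PosSMulMono ℝ A]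

theorem mul_eq_zero_of_inf_eq_zero (hunit : ∀ a : A, ∃ r : ℝ, 0 < r ∧ a ≤ r • (1 : A))
    {c d : A} (hc : 0 ≤ c) (hd : 0 ≤ d) (hcd : c ⊓ d = 0) : c * d = 0 := by
  obtain ⟨r, hr, hbound⟩ := hunit (c ⊔ d)
  have hcd_le_d : c * d ≤ r • d := by
    simpa using mul_le_mul_of_nonneg_right (le_sup_left.trans hbound) hd
  have hcd_le_c : c * d ≤ r • c := by
    simpa using mul_le_mul_of_nonneg_left (le_sup_right.trans hbound) hc
  refine le_antisymm ?_ (mul_nonneg hc hd)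
  calc c * d ≤ r • c ⊓ r • d := le_inf hcd_le_c hcd_le_d
    _ = r • (c ⊓ d) := ((OrderIso.smulRight hr).map_inf c d).symm
    _ = 0 := by rw [hcd, smul_zero]

end LatticeOrderedRing

section UniformLSpan

variable {A : Type*} [CommRing A] [Lattice A] [IsOrderedRing A] [Algebra ℝ A] [PosSMulMono ℝ A]

/-- For an ℓ-ideal `J` and `g ≥ 0`: the uniform closure of the ℓ-ideal generated by `J` and `g`. -/
def uniformLSpan (hunit : ∀ a : A, ∃ r : ℝ, 0 < r ∧ a ≤ r • (1 : A)) (J : Ideal A) (g : A) :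
    Ideal A where
  carrier := {x | ∀ ε : ℝ, 0 < ε → ∃ b ∈ J, ∃ r : ℝ, 0 ≤ r ∧ |x| ≤ b + r • g + ε • 1}
  zero_mem' ε hε := ⟨0, J.zero_mem, 0, le_rfl, by simpa using smul_nonneg hε.le zero_le_one⟩
  add_mem' {x y} hx hy ε hε := by
    obtain ⟨b, hb, r, hr, hxb⟩ := hx (ε / 2) (half_pos hε)
    obtain ⟨b', hb', r', hr', hyb⟩ := hy (ε / 2) (half_pos hε)
    refine ⟨b + b', J.add_mem hb hb', r + r', add_nonneg hr hr', ?_⟩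
    calc |x + y| ≤ |x| + |y| := abs_add_le x y
      _ ≤ (b + r • g + (ε / 2) • 1) + (b' + r' • g + (ε / 2) • 1) := add_le_add hxb hyb
      _ = b + b' + (r + r') • g + ε • 1 := by module
  smul_mem' t {x} hx ε hε := by
    obtain ⟨s, hs, ht⟩ := hunit |t|
    obtain ⟨b, hb, r, hr, hxb⟩ := hx (ε / s) (div_pos hε hs)
    refine ⟨s • b, J.smul_of_tower_mem s hb, s * r, mul_nonneg hs.le hr, ?_⟩
    calc |t • x| ≤ |t| * |x| := abs_mul_le t x
      _ ≤ (s • 1) * |x| := mul_le_mul_of_nonneg_right ht (abs_nonneg x)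
      _ = s • |x| := by rw [smul_mul_assoc, one_mul]
      _ ≤ s • (b + r • g + (ε / s) • 1) := smul_le_smul_of_nonneg_left hxb hs.le
      _ = s • b + (s * r) • g + ε • 1 := by
        rw [smul_add, smul_add, smul_smul, smul_smul, mul_div_cancel₀ ε hs.ne']

variable {hunit : ∀ a : A, ∃ r : ℝ, 0 < r ∧ a ≤ r • (1 : A)} {J : Ideal A} {g : A}

theorem le_uniformLSpan (hJ : IsLIdeal J) : J ≤ uniformLSpan hunit J g := fun x hx ε hε =>
  ⟨|x|, hJ.abs_mem_iff.2 hx, 0, le_rfl, by simpa using smul_nonneg hε.le zero_le_one⟩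

theorem self_mem_uniformLSpan (hg : 0 ≤ g) : g ∈ uniformLSpan hunit J g := fun ε hε =>
  ⟨0, J.zero_mem, 1, zero_le_one, by simpa [abs_of_nonneg hg] using smul_nonneg hε.le zero_le_one⟩

theorem isLIdeal_uniformLSpan : IsLIdeal (uniformLSpan hunit J g) := fun _ _ hx hax ε hε =>
  (hx ε hε).imp fun _ => .imp_right fun ⟨r, hr, h⟩ => ⟨r, hr, hax.trans h⟩

theorem isArchLIdeal_uniformLSpan : IsArchLIdeal (uniformLSpan hunit J g) := by
  intro x w hx ε hε
  obtain ⟨N, hN, hw⟩ := hunit w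
  obtain ⟨n, hn⟩ := exists_nat_gt (N / ε)
  have hn0 : (0 : ℝ) < n := (div_pos hN hε).trans hn
  have hNn : N < n * ε := (div_lt_iff₀ hε).1 hn
  obtain ⟨b, hb, r, hr, hxb⟩ := hx n (by exact_mod_cast hn0) (n * ε - N) (sub_pos.2 hNn)
  refine ⟨(n : ℝ)⁻¹ • b, J.smul_of_tower_mem _ hb, (n : ℝ)⁻¹ * r, by positivity, ?_⟩
  have key : (n : ℝ) • (x ⊔ 0) ≤ b + r • g + ((n : ℝ) * ε) • 1 :=
    calc (n : ℝ) • (x ⊔ 0) = (n • x - w + w) ⊔ 0 := by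
          rw [sub_add_cancel, ← Nat.cast_smul_eq_nsmul ℝ]
          simpa only [OrderIso.smulRight_apply, smul_zero] using
            (OrderIso.smulRight hn0).map_sup x 0
      _ ≤ (n • x - w) ⊔ 0 + w ⊔ 0 :=
          sup_le (add_le_add le_sup_left le_sup_left) (add_nonneg le_sup_right le_sup_right)
      _ ≤ |(n • x - w) ⊔ 0| + N • 1 :=
          add_le_add (le_abs_self _) (sup_le hw (smul_nonneg hN.le zero_le_one))
      _ ≤ (b + r • g + ((n : ℝ) * ε - N) • 1) + N • 1 := add_le_add hxb le_rfl
      _ = b + r • g + ((n : ℝ) * ε) • 1 := by module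
  calc |x ⊔ 0| = (n : ℝ)⁻¹ • ((n : ℝ) • (x ⊔ 0)) := by
        rw [abs_of_nonneg le_sup_right, inv_smul_smul₀ hn0.ne']
    _ ≤ (n : ℝ)⁻¹ • (b + r • g + ((n : ℝ) * ε) • 1) :=
        smul_le_smul_of_nonneg_left key (by positivity)
    _ = (n : ℝ)⁻¹ • b + ((n : ℝ)⁻¹ * r) • g + ε • 1 := by
        rw [smul_add, smul_add, smul_smul, smul_smul, inv_mul_cancel_left₀ hn0.ne']

theorem uniformLSpan_ne_top (hJ : IsLIdeal J) {d : A} (hd : 0 ≤ d) (hdg : d * g = 0)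
    (hdJ : d ∉ J) : uniformLSpan hunit J g ≠ ⊤ := by
  intro htop
  have hone : (1 : A) ∈ uniformLSpan hunit J g := htop ▸ Submodule.mem_top
  obtain ⟨b, hb, r, -, hle⟩ := hone 2⁻¹ (by norm_num)
  have hdb : d ≤ d * b + (2⁻¹ : ℝ) • d :=
    calc d = d * |1| := by rw [abs_of_nonneg zero_le_one, mul_one]
      _ ≤ d * (b + r • g + (2⁻¹ : ℝ) • 1) := mul_le_mul_of_nonneg_left hle hd
      _ = d * b + (2⁻¹ : ℝ) • d := by
        rw [mul_add, mul_add, mul_smul_comm, mul_smul_comm, hdg, smul_zero, add_zero, mul_one]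
  have hhalf_le : (2⁻¹ : ℝ) • d ≤ d * b := by
    have := sub_le_iff_le_add.2 hdb
    rwa [show d - (2⁻¹ : ℝ) • d = (2⁻¹ : ℝ) • d by module] at this
  have hhalf : (2⁻¹ : ℝ) • d ∈ J :=
    hJ.mem_of_nonneg_of_le_s14 (smul_nonneg (by norm_num) hd) hhalf_le (J.mul_mem_left d hb)
  exact hdJ (by simpa [smul_smul] using J.smul_of_tower_mem (2 : ℝ) hhalf)

end UniformLSpan

theorem exists_proper_arch_add_eq_top_general {A : Type*} [CommRing A] [Lattice A]
    [Algebra ℝ A] (hA : IsBal A) (I J : Ideal A)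
    (hI : IsLIdeal I) (hJ : IsLIdeal J) (hJa : IsArchLIdeal J)
    (hIJ : ¬ I ≤ J) :
    ∃ K : Ideal A, IsLIdeal K ∧ IsArchLIdeal K ∧ K ≠ ⊤ ∧ J ≤ K ∧ K + I = ⊤ := by
  have := hA.isOrderedRing
  have := hA.posSMulMono
  obtain ⟨a, haI, haJ⟩ := SetLike.not_le_iff_exists.1 hIJ
  obtain ⟨n, hposJ⟩ :=
    hJa.exists_nsmul_sub_one_posPart_notMem (abs_nonneg a) (mt hJ.abs_mem_iff.1 haJ)
  set x := n • |a|
  have hx : 0 ≤ x := nsmul_nonneg (abs_nonneg a) n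
  have hxI : x ∈ I := nsmul_mem (hI.abs_mem_iff.2 haI) n
  set K := uniformLSpan hA.exists_le_smul_one J (x - 1)⁻
  have hKI : K + I = ⊤ := by
    obtain ⟨h0, hle⟩ := one_sub_negPart_sub_one_mem_Icc hx
    rw [Ideal.eq_top_iff_one, Submodule.add_eq_sup, Submodule.mem_sup]
    exact ⟨_, self_mem_uniformLSpan (negPart_nonneg _), _,
      hI.mem_of_nonneg_of_le_s14 h0 hle hxI, add_sub_cancel _ _⟩
  have hmul : (x - 1)⁺ * (x - 1)⁻ = 0 :=
    mul_eq_zero_of_inf_eq_zero hA.exists_le_smul_one (posPart_nonneg _) (negPart_nonneg _)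
      (posPart_inf_negPart_eq_zero _)
  exact ⟨K, isLIdeal_uniformLSpan, isArchLIdeal_uniformLSpan,
    uniformLSpan_ne_top hJ (posPart_nonneg _) hmul hposJ, le_uniformLSpan hJ, hKI⟩

/-- In a bal-algebra, if `I, J` are proper archimedean ℓ-ideals with `I ⊄ J`, then
there is a proper archimedean ℓ-ideal `K` with `J ⊆ K` and `K + I = A`. -/
theorem exists_proper_arch_add_eq_top {A : Type*} [CommRing A] [Lattice A]
    [Algebra ℝ A] (hA : IsBal A) (I J : Ideal A)
    (hI : IsLIdeal I) (hIa : IsArchLIdeal I) (hIp : I ≠ ⊤)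
    (hJ : IsLIdeal J) (hJa : IsArchLIdeal J) (hJp : J ≠ ⊤)
    (hIJ : ¬ I ≤ J) :
    ∃ K : Ideal A, IsLIdeal K ∧ IsArchLIdeal K ∧ K ≠ ⊤ ∧ J ≤ K ∧ K + I = ⊤ :=
  exists_proper_arch_add_eq_top_general hA I J hI hJ hJa hIJ
end

section
/- Let A be a bal-algebra, I a proper archimedean ℓ-ideal of A, and a ∈ A with 0 ≤ a. Then the set R = {r ∈ ℝ | (a − r·1)⁻ ∈ I} is nonempty and bounded above, and, setting s = sup R, one has (a − s·1)⁻ ∈ I. -/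
/-!
Every `r ∈ R` is at most any real `m` with `a ≤ m·1`: otherwise `(r - m)·1 ≤ (a - r·1)⁻`
would put a unit into `I`. For `s = sup R` and `n ≥ 1` pick `r ∈ R` with `s - 1/n < r`;
then `n·(a - s·1)⁻ - 1 ≤ n·(a - r·1)⁻ ∈ I`, so `(n·(a - s·1)⁻ - 1)⁺ ∈ I` for every `n`,
and archimedeanity of `I` gives `(a - s·1)⁻ ∈ I`.
-/

section BalAlgebra

variable {A : Type*} [CommRing A] [Lattice A]

theorem IsBal.isOrderedAddMonoid_s15 [Algebra ℝ A] (hA : IsBal A) : IsOrderedAddMonoid A :=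
  { add_le_add_left := hA.add_le_add_right }

theorem IsBal.exists_le_algebraMap [Algebra ℝ A] (hA : IsBal A) (a : A) :
    ∃ m : ℝ, a ≤ algebraMap ℝ A m := by
  obtain ⟨m, -, hm⟩ := hA.strong_unit a
  exact ⟨m, by rwa [map_natCast, ← nsmul_one]⟩

section OrderedAddMonoid

variable [IsOrderedAddMonoid A] {I : Ideal A}

theorem IsLIdeal.mem_of_nonneg_of_le_s15 (hI : IsLIdeal I) {u v : A} (hu : 0 ≤ u) (huv : u ≤ v)
    (hv : v ∈ I) : u ∈ I :=
  hI u v hv <| sup_le (huv.trans le_sup_left)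
    (((neg_nonpos.2 hu).trans (hu.trans huv)).trans le_sup_left)

theorem IsArchLIdeal.posPart_mem_of_forall_nsmul_sub_one_le (hIa : IsArchLIdeal I)
    (hI : IsLIdeal I) {x : A} (hx : ∀ n : ℕ, 1 ≤ n → ∃ y, y ⊔ 0 ∈ I ∧ n • x - 1 ≤ n • y) :
    x ⊔ 0 ∈ I := by
  refine hIa x 1 fun n hn => ?_
  obtain ⟨y, hyI, hxy⟩ := hx n hn
  have hny_nonneg : 0 ≤ n • (y ⊔ 0) := nsmul_nonneg le_sup_right n
  have hnyI : n • (y ⊔ 0) ∈ I := by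
    rw [nsmul_eq_mul]
    exact I.mul_mem_left _ hyI
  exact hI.mem_of_nonneg_of_le_s15 le_sup_right
    (sup_le (hxy.trans (nsmul_le_nsmul_right le_sup_left n)) hny_nonneg) hnyI

end OrderedAddMonoid

section Bal

variable [Algebra ℝ A] (hA : IsBal A) {I : Ideal A}
include hA

theorem IsBal.le_of_negPart_sub_algebraMap_mem (hI : IsLIdeal I) (hIp : I ≠ ⊤) {a : A}
    {m r : ℝ} (ham : a ≤ algebraMap ℝ A m) (hr : -(a - algebraMap ℝ A r) ⊔ 0 ∈ I) :
    r ≤ m := by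
  have := hA.isOrderedAddMonoid_s15
  by_contra! hmr
  have hle : algebraMap ℝ A (r - m) ≤ -(a - algebraMap ℝ A r) := by
    rw [map_sub, neg_sub]
    exact sub_le_sub_left ham _
  have hmem : algebraMap ℝ A (r - m) ∈ I :=
    hI.mem_of_nonneg_of_le_s15 (by simpa using hA.algebraMap_mono (sub_nonneg.2 hmr.le))
      (hle.trans le_sup_left) hr
  exact hIp <| I.eq_top_of_isUnit_mem hmem <|
    (isUnit_iff_ne_zero.2 (sub_ne_zero.2 hmr.ne')).map _

theorem IsBal.nsmul_sub_one_le_of_mul_sub_le_one (a : A) {n : ℕ} {s r : ℝ}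
    (h : n * (s - r) ≤ 1) :
    n • -(a - algebraMap ℝ A s) - 1 ≤ n • -(a - algebraMap ℝ A r) := by
  have := hA.isOrderedAddMonoid_s15
  have key : n • -(a - algebraMap ℝ A s) - 1 - n • -(a - algebraMap ℝ A r) =
      algebraMap ℝ A (n * (s - r) - 1) := by
    simp only [nsmul_eq_mul, map_sub, map_mul, map_natCast, map_one]
    ring
  rw [← sub_nonpos, key]
  simpa using hA.algebraMap_mono (sub_nonpos.2 h)

end Bal

end BalAlgebra

/-- In a bal-algebra, for a proper archimedean ℓ-ideal `I` and `0 ≤ a`, the set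
`R = {r : ℝ | (a - r·1)⁻ ∈ I}` is nonempty and bounded above, and
`(a - (sup R)·1)⁻ ∈ I`, where `x⁻ = (-x) ⊔ 0`. -/
theorem negPart_sub_sSup_mem {A : Type*} [CommRing A] [Lattice A] [Algebra ℝ A]
    (hA : IsBal A) (I : Ideal A)
    (hI : IsLIdeal I) (hIa : IsArchLIdeal I) (hIp : I ≠ ⊤)
    (a : A) (ha : 0 ≤ a) :
    {r : ℝ | -(a - algebraMap ℝ A r) ⊔ 0 ∈ I}.Nonempty ∧
    BddAbove {r : ℝ | -(a - algebraMap ℝ A r) ⊔ 0 ∈ I} ∧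
    -(a - algebraMap ℝ A (sSup {r : ℝ | -(a - algebraMap ℝ A r) ⊔ 0 ∈ I})) ⊔ 0 ∈ I := by
  have := hA.isOrderedAddMonoid_s15
  set R := {r : ℝ | -(a - algebraMap ℝ A r) ⊔ 0 ∈ I}
  have hR : R.Nonempty := ⟨0, by simp [R, sup_eq_right.2 (neg_nonpos.2 ha)]⟩
  obtain ⟨m, ham⟩ := hA.exists_le_algebraMap a
  refine ⟨hR, ⟨m, fun r hr => hA.le_of_negPart_sub_algebraMap_mem hI hIp ham hr⟩, ?_⟩
  refine hIa.posPart_mem_of_forall_nsmul_sub_one_le hI fun n hn => ?_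
  have hn : (0 : ℝ) < n := by exact_mod_cast hn
  obtain ⟨r, hr, hsr⟩ := exists_lt_of_lt_csSup hR (sub_lt_self (sSup R) (inv_pos.2 hn))
  refine ⟨_, hr, hA.nsmul_sub_one_le_of_mul_sub_le_one a ?_⟩
  rw [← le_div_iff₀' hn, one_div]
  linarith
end

section
/- Let A be a bal-algebra and let X be the set of proper archimedean ℓ-ideals of A, ordered by inclusion and equipped with the Alexandroff topology whose open sets are the upward-closed subsets of X. For every I ∈ X, the set ↑I = {J ∈ X | I ⊆ J} is a regular open subset of X, i.e., int(cl(↑I)) = ↑I. -/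
/-- The set of proper archimedean ℓ-ideals of `A`, ordered by inclusion. -/
abbrev ProperArchLIdeal (A : Type*) [CommRing A] [Lattice A] :=
  {I : Ideal A // IsLIdeal I ∧ IsArchLIdeal I ∧ I ≠ ⊤}

noncomputable instance (A : Type*) [CommRing A] [Lattice A] :
    TopologicalSpace (ProperArchLIdeal A) := alexandroff _

/-!
In the upper-set topology the closure of `↑I` is its lower closure and the interior of a set is
the largest upper set inside it, so `J ∈ int (cl ↑I)` says that every `K ⊇ J` lies, together
with `I`, in a common proper archimedean ℓ-ideal. If `I ⊄ J`, pick `0 ≤ a ∈ I \ J`. Since `J` is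
archimedean, `(a - ε)⁺ ∉ J` for some `ε > 0`. The uniform closure `K` of the ℓ-ideal generated by
`J` and `c = (ε - a)⁺` is an archimedean ℓ-ideal, and it still misses `(a - ε)⁺`, which is
disjoint from `c`; so `K` is proper. But an ℓ-ideal containing `I` and `K` contains
`a + (ε - a)⁺ ≥ ε`, hence `1`.
-/

open Set

section LatticeOrderedGroup

variable {A : Type*} [AddCommGroup A] [Lattice A] [AddLeftMono A] {x y z : A}

theorem inf_add_le_inf_add_inf (hx : 0 ≤ x) (hy : 0 ≤ y) (hz : 0 ≤ z) :
    x ⊓ (y + z) ≤ x ⊓ y + x ⊓ z := by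
  rw [add_inf, inf_add x y z]
  exact le_inf (inf_le_left.trans (le_add_of_nonneg_left (le_inf hx hy)))
    (inf_le_inf_right _ (le_add_of_nonneg_right hz))

theorem inf_nsmul_eq_zero (hx : 0 ≤ x) (hy : 0 ≤ y) (h : x ⊓ y = 0) (n : ℕ) :
    x ⊓ n • y = 0 := by
  induction n with
  | zero => simpa using hx
  | succ n ih =>
    refine le_antisymm ?_ (le_inf hx (nsmul_nonneg hy _))
    calc x ⊓ (n + 1) • y = x ⊓ (n • y + y) := by rw [succ_nsmul]
      _ ≤ x ⊓ n • y + x ⊓ y := inf_add_le_inf_add_inf hx (nsmul_nonneg hy n) hy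
      _ = 0 := by rw [ih, h, add_zero]

end LatticeOrderedGroup

theorem abs_mul_le_abs_mul_abs_s18 {A : Type*} [CommRing A] [Lattice A] [IsOrderedRing A]
    (x y : A) : |x * y| ≤ |x| * |y| := by
  have key : ∀ p q r s : A, 0 ≤ p → 0 ≤ q → 0 ≤ r → 0 ≤ s →
      |(p - q) * (r - s)| ≤ (p + q) * (r + s) := by
    intro p q r s hp hq hr hs
    refine abs_le'.2 ⟨?_, ?_⟩ <;> rw [← sub_nonneg]
    · have h : (p + q) * (r + s) - (p - q) * (r - s) = 2 * (p * s + q * r) := by ring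
      rw [h]
      exact mul_nonneg zero_le_two (add_nonneg (mul_nonneg hp hs) (mul_nonneg hq hr))
    · have h : (p + q) * (r + s) - -((p - q) * (r - s)) = 2 * (p * r + q * s) := by ring
      rw [h]
      exact mul_nonneg zero_le_two (add_nonneg (mul_nonneg hp hr) (mul_nonneg hq hs))
  simpa only [posPart_sub_negPart, posPart_add_negPart] using
    key x⁺ x⁻ y⁺ y⁻ (posPart_nonneg x) (negPart_nonneg x) (posPart_nonneg y) (negPart_nonneg y)

section LIdeal

variable {A : Type*} [CommRing A] [Lattice A] [AddLeftMono A] {J : Ideal A}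

theorem IsLIdeal.abs_mem_s18 (hJ : IsLIdeal J) {x : A} (hx : x ∈ J) : |x| ∈ J :=
  hJ _ x hx (abs_abs x).le

theorem IsLIdeal.mem_of_nonneg_of_le_s18 (hJ : IsLIdeal J) {x y : A} (hx : 0 ≤ x) (hxy : x ≤ y)
    (hy : y ∈ J) : x ∈ J :=
  hJ x y hy ((abs_of_nonneg hx).trans_le (hxy.trans (le_abs_self y)))

end LIdeal

section Bal

variable {A : Type*} [CommRing A] [Lattice A] [Algebra ℝ A] (hA : IsBal A)
include hA

theorem IsBal.isOrderedRing_s18 : IsOrderedRing A :=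
  haveI : IsOrderedAddMonoid A := { add_le_add_left := hA.add_le_add_right }
  haveI : ZeroLEOneClass A := ⟨by simpa using hA.algebraMap_mono zero_le_one⟩
  .of_mul_nonneg hA.mul_nonneg

theorem IsBal.algebraMap_nonneg {r : ℝ} (hr : 0 ≤ r) : 0 ≤ algebraMap ℝ A r := by
  simpa using hA.algebraMap_mono hr

theorem IsBal.exists_le_algebraMap_s18 (x : A) : ∃ r : ℝ, 0 < r ∧ x ≤ algebraMap ℝ A r := by
  obtain ⟨n, hn, hx⟩ := hA.strong_unit x
  exact ⟨n, by exact_mod_cast hn, by rwa [map_natCast, ← nsmul_one]⟩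

variable {J : Ideal A}

theorem IsLIdeal.eq_top_of_algebraMap_le (hJ : IsLIdeal J) {ε : ℝ} (hε : 0 < ε) {x : A}
    (hεx : algebraMap ℝ A ε ≤ x) (hx : x ∈ J) : J = ⊤ := by
  have := hA.isOrderedRing_s18
  have hεJ : algebraMap ℝ A ε ∈ J := hJ.mem_of_nonneg_of_le_s18 (hA.algebraMap_nonneg hε.le) hεx hx
  rw [Ideal.eq_top_iff_one, ← map_one (algebraMap ℝ A), ← inv_mul_cancel₀ hε.ne', map_mul]
  exact J.mul_mem_left _ hεJ

-- `(n • x - 1)⁺ ≤ n • (x - 1 / n)⁺` reduces this to the archimedean property of `J`.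
theorem IsArchLIdeal.posPart_mem_of_forall (hJl : IsLIdeal J) (hJa : IsArchLIdeal J) {x : A}
    (h : ∀ ε : ℝ, 0 < ε → (x - algebraMap ℝ A ε)⁺ ∈ J) : x⁺ ∈ J := by
  have := hA.isOrderedRing_s18
  refine hJa x 1 fun n hn => ?_
  have hn' : (0 : ℝ) < n := by exact_mod_cast hn
  have hsmul : n • x - 1 = n • (x - algebraMap ℝ A (n : ℝ)⁻¹) := by
    rw [smul_sub, ← map_nsmul, nsmul_eq_mul n (n : ℝ)⁻¹, mul_inv_cancel₀ hn'.ne', map_one]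
  have hmem : n • (x - algebraMap ℝ A (n : ℝ)⁻¹)⁺ ∈ J := by
    rw [nsmul_eq_mul]
    exact J.mul_mem_left _ (h _ (inv_pos.2 hn'))
  refine hJl.mem_of_nonneg_of_le_s18 le_sup_right ?_ hmem
  rw [hsmul]
  exact sup_le (nsmul_le_nsmul_right (le_posPart _) n) (nsmul_nonneg (posPart_nonneg _) n)

end Bal

section ApproxSpan

variable {A : Type*} [CommRing A] [Lattice A] [Algebra ℝ A]

/-- Membership in the uniform closure of the ℓ-ideal generated by `J` and `c ≥ 0`. -/
def ApproxDominated (J : Ideal A) (c x : A) : Prop :=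
  ∀ δ : ℝ, 0 < δ → ∃ j ∈ J, 0 ≤ j ∧ ∃ m : ℕ, |x| ≤ j + m • c + algebraMap ℝ A δ

variable {J : Ideal A} {c x y : A}

theorem ApproxDominated.of_abs_le (hx : ApproxDominated J c x) (h : |y| ≤ |x|) :
    ApproxDominated J c y := fun δ hδ => by
  obtain ⟨j, hj, hj0, m, hxm⟩ := hx δ hδ
  exact ⟨j, hj, hj0, m, h.trans hxm⟩

variable (hA : IsBal A)
include hA

theorem IsBal.approxDominated_zero : ApproxDominated J c 0 := fun δ hδ => by
  have := hA.isOrderedRing_s18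
  exact ⟨0, J.zero_mem, le_rfl, 0, by simpa using hA.algebraMap_nonneg hδ.le⟩

theorem IsBal.approxDominated_add (hx : ApproxDominated J c x) (hy : ApproxDominated J c y) :
    ApproxDominated J c (x + y) := fun δ hδ => by
  have := hA.isOrderedRing_s18
  obtain ⟨j₁, hj₁, hj₁0, m₁, hxm⟩ := hx (δ / 2) (half_pos hδ)
  obtain ⟨j₂, hj₂, hj₂0, m₂, hym⟩ := hy (δ / 2) (half_pos hδ)
  refine ⟨j₁ + j₂, J.add_mem hj₁ hj₂, add_nonneg hj₁0 hj₂0, m₁ + m₂, ?_⟩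
  calc |x + y| ≤ |x| + |y| := abs_add_le x y
    _ ≤ (j₁ + m₁ • c + algebraMap ℝ A (δ / 2)) + (j₂ + m₂ • c + algebraMap ℝ A (δ / 2)) :=
      add_le_add hxm hym
    _ = j₁ + j₂ + (m₁ + m₂) • c + algebraMap ℝ A δ := by
      rw [add_nsmul]; conv_rhs => rw [← add_halves δ, map_add]
      abel

theorem IsBal.approxDominated_mul (r : A) (hx : ApproxDominated J c x) :
    ApproxDominated J c (r * x) := fun δ hδ => by
  have := hA.isOrderedRing_s18
  obtain ⟨N, hN, hrN⟩ := hA.strong_unit |r|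
  have hN' : (0 : ℝ) < N := by exact_mod_cast hN
  obtain ⟨j, hj, hj0, m, hxm⟩ := hx (δ / N) (div_pos hδ hN')
  refine ⟨N • j, J.smul_of_tower_mem N hj, nsmul_nonneg hj0 N, N * m, ?_⟩
  calc |r * x| ≤ |r| * |x| := abs_mul_le_abs_mul_abs_s18 r x
    _ ≤ N • (1 : A) * (j + m • c + algebraMap ℝ A (δ / N)) :=
      mul_le_mul hrN hxm (abs_nonneg x) (nsmul_nonneg zero_le_one N)
    _ = N • j + (N * m) • c + algebraMap ℝ A δ := by
      rw [nsmul_one, ← map_natCast (algebraMap ℝ A), mul_add, mul_add, ← map_mul,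
        mul_div_cancel₀ δ hN'.ne', map_natCast, mul_nsmul', nsmul_eq_mul N j, nsmul_eq_mul N]

theorem IsBal.approxDominated_of_forall
    (h : ∀ δ : ℝ, 0 < δ → ∃ y, ApproxDominated J c y ∧ |x| ≤ |y| + algebraMap ℝ A δ) :
    ApproxDominated J c x := fun δ hδ => by
  have := hA.isOrderedRing_s18
  obtain ⟨y, hy, hxy⟩ := h (δ / 2) (half_pos hδ)
  obtain ⟨j, hj, hj0, m, hym⟩ := hy (δ / 2) (half_pos hδ)
  refine ⟨j, hj, hj0, m, ?_⟩
  calc |x| ≤ j + m • c + algebraMap ℝ A (δ / 2) + algebraMap ℝ A (δ / 2) :=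
        hxy.trans (add_le_add_left hym _)
    _ = j + m • c + algebraMap ℝ A δ := by rw [add_assoc, ← map_add, add_halves]

variable (J c) in
def IsBal.approxSpan : Ideal A where
  carrier := {x | ApproxDominated J c x}
  zero_mem' := hA.approxDominated_zero
  add_mem' := hA.approxDominated_add
  smul_mem' r _ := hA.approxDominated_mul r

theorem IsBal.isLIdeal_approxSpan : IsLIdeal (hA.approxSpan J c) :=
  fun _ _ hb h => ApproxDominated.of_abs_le hb h

theorem IsBal.le_approxSpan (hJ : IsLIdeal J) : J ≤ hA.approxSpan J c := fun j hj δ hδ => by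
  have := hA.isOrderedRing_s18
  exact ⟨|j|, hJ.abs_mem_s18 hj, abs_nonneg j, 0, by
    simpa using hA.algebraMap_nonneg hδ.le⟩

theorem IsBal.mem_approxSpan_self (hc : 0 ≤ c) : c ∈ hA.approxSpan J c := fun δ hδ => by
  have := hA.isOrderedRing_s18
  exact ⟨0, J.zero_mem, le_rfl, 1, by
    simpa [abs_of_nonneg hc] using hA.algebraMap_nonneg hδ.le⟩

-- `x⁺ ≤ (n • x - b)⁺ / n + b⁺ / n`, and the last term is uniformly small once `n` is large.
theorem IsBal.isArchLIdeal_approxSpan : IsArchLIdeal (hA.approxSpan J c) := by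
  have := hA.isOrderedRing_s18
  set e := algebraMap ℝ A
  intro x b hxb
  refine hA.approxDominated_of_forall fun δ hδ => ?_
  obtain ⟨r, hr, hbr⟩ := hA.exists_le_algebraMap_s18 b
  obtain ⟨n, hn⟩ := exists_nat_gt (r / δ)
  have hn0 : (0 : ℝ) < n := (div_pos hr hδ).trans hn
  have hn1 : 1 ≤ n := by exact_mod_cast hn0
  have hinv : 0 ≤ e (n : ℝ)⁻¹ := hA.algebraMap_nonneg (inv_nonneg.2 hn0.le)
  refine ⟨e (n : ℝ)⁻¹ * (n • x - b)⁺, (hA.approxSpan J c).mul_mem_left _ (hxb n hn1), ?_⟩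
  have hx : x = e (n : ℝ)⁻¹ * ((n • x - b) + b) := by
    rw [sub_add_cancel, nsmul_eq_mul, ← map_natCast e, ← mul_assoc, ← map_mul,
      inv_mul_cancel₀ hn0.ne', map_one, one_mul]
  have hb : e (n : ℝ)⁻¹ * b⁺ ≤ e δ := by
    calc e (n : ℝ)⁻¹ * b⁺ ≤ e (n : ℝ)⁻¹ * e r :=
          mul_le_mul_of_nonneg_left (sup_le hbr (hA.algebraMap_nonneg hr.le)) hinv
      _ = e (r / n) := by rw [← map_mul, inv_mul_eq_div]
      _ ≤ e δ := hA.algebraMap_mono ((div_lt_iff₀ hn0).2 ((div_lt_iff₀' hδ).1 hn)).le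
  calc |x⁺| = x⁺ := abs_of_nonneg (posPart_nonneg x)
    _ ≤ e (n : ℝ)⁻¹ * (n • x - b)⁺ + e (n : ℝ)⁻¹ * b⁺ := by
      rw [← mul_add]
      refine sup_le ?_ (_root_.mul_nonneg hinv (add_nonneg (posPart_nonneg _) (posPart_nonneg _)))
      conv_lhs => rw [hx]
      exact mul_le_mul_of_nonneg_left (add_le_add (le_posPart _) (le_posPart _)) hinv
    _ ≤ |e (n : ℝ)⁻¹ * (n • x - b)⁺| + e δ := add_le_add (le_abs_self _) hb

-- Disjointness from `c` lets `d ⊓ (j + m • c) ≤ j` absorb the multiples of `c`.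
theorem IsBal.mem_of_mem_approxSpan (hJl : IsLIdeal J) (hJa : IsArchLIdeal J) (hc : 0 ≤ c)
    {d : A} (hd : 0 ≤ d) (hdc : d ⊓ c = 0) (hdK : d ∈ hA.approxSpan J c) : d ∈ J := by
  have := hA.isOrderedRing_s18
  rw [← posPart_of_nonneg hd]
  refine hJa.posPart_mem_of_forall hA hJl fun δ hδ => ?_
  obtain ⟨j, hj, hj0, m, hdm⟩ := hdK δ hδ
  rw [abs_of_nonneg hd] at hdm
  have hmc : 0 ≤ m • c := nsmul_nonneg hc m
  refine hJl.mem_of_nonneg_of_le_s18 (posPart_nonneg _) ?_ hj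
  calc (d - algebraMap ℝ A δ)⁺ ≤ d ⊓ (j + m • c) :=
        le_inf (sup_le (sub_le_self _ (hA.algebraMap_nonneg hδ.le)) hd)
          (sup_le (sub_le_iff_le_add.2 hdm) (add_nonneg hj0 hmc))
    _ ≤ d ⊓ j + d ⊓ m • c := inf_add_le_inf_add_inf hd hj0 hmc
    _ = d ⊓ j := by rw [inf_nsmul_eq_zero hd hc hdc, add_zero]
    _ ≤ j := inf_le_right

end ApproxSpan

section Separation

variable {A : Type*} [CommRing A] [Lattice A] [Algebra ℝ A] (hA : IsBal A)
include hA

theorem IsBal.exists_archLIdeal_posPart_sub_mem {J : Ideal A} (hJl : IsLIdeal J)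
    (hJa : IsArchLIdeal J) {a : A} (ha : 0 ≤ a) (haJ : a ∉ J) :
    ∃ K : Ideal A, IsLIdeal K ∧ IsArchLIdeal K ∧ K ≠ ⊤ ∧ J ≤ K ∧
      ∃ ε : ℝ, 0 < ε ∧ (algebraMap ℝ A ε - a)⁺ ∈ K := by
  have := hA.isOrderedRing_s18
  obtain ⟨ε, hε, hεJ⟩ : ∃ ε : ℝ, 0 < ε ∧ (a - algebraMap ℝ A ε)⁺ ∉ J := by
    by_contra! h
    exact haJ (posPart_of_nonneg ha ▸ hJa.posPart_mem_of_forall hA hJl h)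
  have hdisj : (a - algebraMap ℝ A ε)⁺ ⊓ (algebraMap ℝ A ε - a)⁺ = 0 := by
    rw [inf_comm, ← neg_sub (algebraMap ℝ A ε) a, posPart_neg]
    exact posPart_inf_negPart_eq_zero _
  refine ⟨hA.approxSpan J _, hA.isLIdeal_approxSpan, hA.isArchLIdeal_approxSpan, fun htop => ?_,
    hA.le_approxSpan hJl, ε, hε, hA.mem_approxSpan_self (posPart_nonneg _)⟩
  exact hεJ (hA.mem_of_mem_approxSpan hJl hJa (posPart_nonneg _) (posPart_nonneg _) hdisj
    (htop ▸ Submodule.mem_top))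

theorem ProperArchLIdeal.exists_le_forall_not_le {I J : ProperArchLIdeal A} (hIJ : ¬I ≤ J) :
    ∃ K, J ≤ K ∧ ∀ M, I ≤ M → ¬K ≤ M := by
  have := hA.isOrderedRing_s18
  obtain ⟨a, haI, haJ⟩ := SetLike.not_le_iff_exists.1 (show ¬I.1 ≤ J.1 from hIJ)
  obtain ⟨K, hKl, hKa, hKtop, hJK, ε, hε, hK⟩ := hA.exists_archLIdeal_posPart_sub_mem J.2.1
    J.2.2.1 (abs_nonneg a) fun h => haJ (J.2.1 a _ h (abs_abs a).ge)
  refine ⟨⟨K, hKl, hKa, hKtop⟩, hJK, fun M hIM hKM => M.2.2.2 ?_⟩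
  exact M.2.1.eq_top_of_algebraMap_le hA hε (sub_le_iff_le_add'.1 (le_posPart _))
    (M.1.add_mem (hIM (I.2.1.abs_mem_s18 haI)) (hKM hK))

end Separation

theorem Topology.IsUpperSet.interior_closure_Ici_eq {X : Type*} [Preorder X] [TopologicalSpace X]
    [Topology.IsUpperSet X] {a : X} (h : ∀ b, ¬a ≤ b → ∃ c, b ≤ c ∧ ∀ m, a ≤ m → ¬c ≤ m) :
    interior (closure (Ici a)) = Ici a := by
  refine subset_antisymm (fun b hb => ?_)
    (interior_maximal subset_closure (isOpen_iff_isUpperSet.2 (isUpperSet_Ici a)))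
  by_contra hab
  obtain ⟨c, hbc, hc⟩ := h b hab
  have hcl : c ∈ closure (Ici a) :=
    interior_subset (isOpen_iff_isUpperSet.1 isOpen_interior hbc hb)
  rw [closure_eq_lowerClosure] at hcl
  obtain ⟨m, ham, hcm⟩ := hcl
  exact hc m ham hcm

instance (A : Type*) [CommRing A] [Lattice A] : Topology.IsUpperSet (ProperArchLIdeal A) :=
  ⟨rfl⟩

/-- In the Alexandroff space of proper archimedean ℓ-ideals of a bal-algebra `A`,
each principal upper set `↑I = {J | I ⊆ J}` is regular open. -/
theorem Ici_regularOpen {A : Type*} [CommRing A] [Lattice A] [Algebra ℝ A]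
    (hA : IsBal A) (I : ProperArchLIdeal A) :
    interior (closure (Set.Ici I)) = Set.Ici I :=
  Topology.IsUpperSet.interior_closure_Ici_eq fun _ hIJ =>
    ProperArchLIdeal.exists_le_forall_not_le hA hIJ
end
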